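/- arXiv:2410.24053 — 4 statements merged into one kernel-verified Lean document; each statement's English description precedes it below -/
import Mathlib

section
/- The weakening rule is height-preserving admissible in the linear nested sequent calculus LNGL: if G // (Γ ⊢ Δ) // H has a proof of height h in LNGL, then G // (Γ,Σ ⊢ Π,Δ) // H has a proof of height at most h in LNGL. -/
/-- Modal formulas built from propositional atoms with ¬, ∨, □. -/
inductive Fml : Type
  | atom : ℕ → Fml
  | neg : Fml → Fml
  | or : Fml → Fml → Fml
  | box : Fml → Fml
  deriving DecidableEq

/-- Implication φ → ψ abbreviates ¬φ ∨ ψ. -/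
def Fml.imp (φ ψ : Fml) : Fml := .or (.neg φ) ψ

/-- Conjunction φ ∧ ψ abbreviates ¬(¬φ ∨ ¬ψ). -/
def Fml.and (φ ψ : Fml) : Fml := .neg (.or (.neg φ) (.neg ψ))

/-- A linear nested sequent: a list of components Γ ⊢ Δ. -/
abbrev LNS := List (Multiset Fml × Multiset Fml)

/-- The linear nested sequent calculus LNGL, indexed by height:
`LNGL n S` means S has an LNGL proof of height at most n. -/
inductive LNGL : ℕ → LNS → Prop
  | id1 (n : ℕ) (G : LNS) (Γ Δ : Multiset Fml) (p : ℕ) :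
      LNGL n (G ++ [(Fml.atom p ::ₘ Γ, Fml.atom p ::ₘ Δ)])
  | id2 (n : ℕ) (G : LNS) (Γ Δ : Multiset Fml) (φ : Fml) :
      LNGL n (G ++ [(Fml.box φ ::ₘ Γ, Fml.box φ ::ₘ Δ)])
  | negL {n : ℕ} {G : LNS} {Γ Δ : Multiset Fml} {φ : Fml} :
      LNGL n (G ++ [(Γ, φ ::ₘ Δ)]) → LNGL (n + 1) (G ++ [(Fml.neg φ ::ₘ Γ, Δ)])
  | negR {n : ℕ} {G : LNS} {Γ Δ : Multiset Fml} {φ : Fml} :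
      LNGL n (G ++ [(φ ::ₘ Γ, Δ)]) → LNGL (n + 1) (G ++ [(Γ, Fml.neg φ ::ₘ Δ)])
  | orL {n : ℕ} {G : LNS} {Γ Δ : Multiset Fml} {φ ψ : Fml} :
      LNGL n (G ++ [(φ ::ₘ Γ, Δ)]) → LNGL n (G ++ [(ψ ::ₘ Γ, Δ)]) →
      LNGL (n + 1) (G ++ [(Fml.or φ ψ ::ₘ Γ, Δ)])
  | orR {n : ℕ} {G : LNS} {Γ Δ : Multiset Fml} {φ ψ : Fml} :
      LNGL n (G ++ [(Γ, φ ::ₘ ψ ::ₘ Δ)]) → LNGL (n + 1) (G ++ [(Γ, Fml.or φ ψ ::ₘ Δ)])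
  | fourL {n : ℕ} {G : LNS} {Γ Δ Ξ Ω : Multiset Fml} {φ : Fml} :
      LNGL n (G ++ [(Fml.box φ ::ₘ Γ, Δ), (Fml.box φ ::ₘ Ξ, Ω)]) →
      LNGL (n + 1) (G ++ [(Fml.box φ ::ₘ Γ, Δ), (Ξ, Ω)])
  | boxL {n : ℕ} {G : LNS} {Γ Δ Ξ Ω : Multiset Fml} {φ : Fml} :
      LNGL n (G ++ [(Fml.box φ ::ₘ Γ, Δ), (φ ::ₘ Ξ, Ω)]) →
      LNGL (n + 1) (G ++ [(Fml.box φ ::ₘ Γ, Δ), (Ξ, Ω)])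
  | boxR {n : ℕ} {G : LNS} {Γ Δ : Multiset Fml} {φ : Fml} :
      LNGL n (G ++ [(Γ, Δ), ({Fml.box φ}, {φ})]) →
      LNGL (n + 1) (G ++ [(Γ, Fml.box φ ::ₘ Δ)])

/-- Provability in LNGL (at some height). -/
def LNGLProv (S : LNS) : Prop := ∃ n, LNGL n S

/-- Componentwise weakening relation. -/
def Cw (a b : Multiset Fml × Multiset Fml) : Prop := a.1 ≤ b.1 ∧ a.2 ≤ b.2

lemma Cw.refl (a : Multiset Fml × Multiset Fml) : Cw a a := ⟨le_refl _, le_refl _⟩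

lemma wkRefl (S : LNS) : List.Forall₂ Cw S S := by
  induction S with
  | nil => exact List.Forall₂.nil
  | cons a t ih => exact List.Forall₂.cons (Cw.refl a) ih

lemma wkAppend {S T U V : LNS} (h1 : List.Forall₂ Cw S T) (h2 : List.Forall₂ Cw U V) :
    List.Forall₂ Cw (S ++ U) (T ++ V) := by
  induction h1 with
  | nil => exact h2
  | cons h _ ih => exact List.Forall₂.cons h ih

lemma wkSnoc {S : LNS} {c : Multiset Fml × Multiset Fml} {T : LNS}
    (h : List.Forall₂ Cw (S ++ [c]) T) :
    ∃ T' Γ' Δ', T = T' ++ [(Γ', Δ')] ∧ List.Forall₂ Cw S T' ∧ c.1 ≤ Γ' ∧ c.2 ≤ Δ' := by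
  induction S generalizing T with
  | nil =>
    rcases h with _ | ⟨hc, h'⟩
    cases h'
    rename_i b
    exact ⟨[], b.1, b.2, by simp, List.Forall₂.nil, hc.1, hc.2⟩
  | cons a S ih =>
    rcases h with _ | ⟨ha, h'⟩
    obtain ⟨T', Γ', Δ', rfl, hS, h1, h2⟩ := ih h'
    exact ⟨_ :: T', Γ', Δ', rfl, List.Forall₂.cons ha hS, h1, h2⟩

lemma wkSnoc2 {S : LNS} {c1 c2 : Multiset Fml × Multiset Fml} {T : LNS}
    (h : List.Forall₂ Cw (S ++ [c1, c2]) T) :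
    ∃ T' a1 b1 a2 b2, T = T' ++ [(a1, b1), (a2, b2)] ∧ List.Forall₂ Cw S T' ∧
      c1.1 ≤ a1 ∧ c1.2 ≤ b1 ∧ c2.1 ≤ a2 ∧ c2.2 ≤ b2 := by
  have h' : List.Forall₂ Cw ((S ++ [c1]) ++ [c2]) T := by simpa using h
  obtain ⟨T1, a2, b2, rfl, h1, k3, k4⟩ := wkSnoc h'
  obtain ⟨T', a1, b1, rfl, hS, k1, k2⟩ := wkSnoc h1
  exact ⟨T', a1, b1, a2, b2, by simp, hS, k1, k2, k3, k4⟩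

lemma consLeSplit {a : Fml} {s t : Multiset Fml} (h : a ::ₘ s ≤ t) :
    ∃ t', t = a ::ₘ t' ∧ s ≤ t' := by
  refine ⟨t.erase a, (Multiset.cons_erase (Multiset.mem_of_le h (Multiset.mem_cons_self a s))).symm, ?_⟩
  have := Multiset.erase_le_erase a h
  rwa [Multiset.erase_cons_head] at this

lemma singWk {c : Multiset Fml × Multiset Fml} {Γ' Δ' : Multiset Fml}
    (h1 : c.1 ≤ Γ') (h2 : c.2 ≤ Δ') :
    List.Forall₂ Cw [c] [(Γ', Δ')] :=
  List.Forall₂.cons ⟨h1, h2⟩ List.Forall₂.nil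

lemma wk_main {n : ℕ} {S : LNS} (hp : LNGL n S) :
    ∀ T, List.Forall₂ Cw S T → LNGL n T := by
  induction hp with
  | id1 n G Γ Δ p =>
    intro T hT
    obtain ⟨G', Γ', Δ', rfl, hG, h1, h2⟩ := wkSnoc hT
    obtain ⟨Γ'', rfl, _⟩ := consLeSplit h1
    obtain ⟨Δ'', rfl, _⟩ := consLeSplit h2
    exact LNGL.id1 n G' Γ'' Δ'' p
  | id2 n G Γ Δ φ =>
    intro T hT
    obtain ⟨G', Γ', Δ', rfl, hG, h1, h2⟩ := wkSnoc hT
    obtain ⟨Γ'', rfl, _⟩ := consLeSplit h1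
    obtain ⟨Δ'', rfl, _⟩ := consLeSplit h2
    exact LNGL.id2 n G' Γ'' Δ'' φ
  | negL _ ih =>
    intro T hT
    obtain ⟨G', Γ', Δ', rfl, hG, h1, h2⟩ := wkSnoc hT
    obtain ⟨Γ'', rfl, hΓ⟩ := consLeSplit h1
    exact LNGL.negL (ih _ (wkAppend hG (singWk hΓ (Multiset.cons_le_cons _ h2))))
  | negR _ ih =>
    intro T hT
    obtain ⟨G', Γ', Δ', rfl, hG, h1, h2⟩ := wkSnoc hT
    obtain ⟨Δ'', rfl, hΔ⟩ := consLeSplit h2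
    exact LNGL.negR (ih _ (wkAppend hG (singWk (Multiset.cons_le_cons _ h1) hΔ)))
  | orL _ _ ih1 ih2 =>
    intro T hT
    obtain ⟨G', Γ', Δ', rfl, hG, h1, h2⟩ := wkSnoc hT
    obtain ⟨Γ'', rfl, hΓ⟩ := consLeSplit h1
    exact LNGL.orL (ih1 _ (wkAppend hG (singWk (Multiset.cons_le_cons _ hΓ) h2)))
      (ih2 _ (wkAppend hG (singWk (Multiset.cons_le_cons _ hΓ) h2)))
  | orR _ ih =>
    intro T hT
    obtain ⟨G', Γ', Δ', rfl, hG, h1, h2⟩ := wkSnoc hT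
    obtain ⟨Δ'', rfl, hΔ⟩ := consLeSplit h2
    exact LNGL.orR (ih _ (wkAppend hG
      (singWk h1 (Multiset.cons_le_cons _ (Multiset.cons_le_cons _ hΔ)))))
  | fourL _ ih =>
    intro T hT
    obtain ⟨T', a1, b1, a2, b2, rfl, hG, h1, h2, h3, h4⟩ := wkSnoc2 hT
    obtain ⟨Γ'', rfl, hΓ⟩ := consLeSplit h1
    exact LNGL.fourL (ih _ (wkAppend hG (List.Forall₂.cons
      ⟨Multiset.cons_le_cons _ hΓ, h2⟩
      (singWk (Multiset.cons_le_cons _ h3) h4))))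
  | boxL _ ih =>
    intro T hT
    obtain ⟨T', a1, b1, a2, b2, rfl, hG, h1, h2, h3, h4⟩ := wkSnoc2 hT
    obtain ⟨Γ'', rfl, hΓ⟩ := consLeSplit h1
    exact LNGL.boxL (ih _ (wkAppend hG (List.Forall₂.cons
      ⟨Multiset.cons_le_cons _ hΓ, h2⟩
      (singWk (Multiset.cons_le_cons _ h3) h4))))
  | boxR _ ih =>
    intro T hT
    obtain ⟨G', Γ', Δ', rfl, hG, h1, h2⟩ := wkSnoc hT
    obtain ⟨Δ'', rfl, hΔ⟩ := consLeSplit h2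
    exact LNGL.boxR (ih _ (wkAppend hG (List.Forall₂.cons ⟨h1, hΔ⟩ (wkRefl _))))

/-- Weakening is height-preserving admissible in LNGL: any component of a
linear nested sequent may be weakened without increasing proof height. -/
theorem lngl_weakening_hp_admissible (h : ℕ) (G H : LNS)
    (Γ Δ Ξ Ω : Multiset Fml)
    (hp : LNGL h (G ++ [(Γ, Δ)] ++ H)) :
    LNGL h (G ++ [(Γ + Ξ, Ω + Δ)] ++ H) := by
  exact wk_main hp _ (wkAppend (wkAppend (wkRefl G)
    (singWk (Multiset.le_add_right _ _) (Multiset.le_add_left _ _))) (wkRefl H))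
end

section
/- The rules 4L and □L are height-preserving invertible in LNGL: if the conclusion of an instance of 4L (respectively □L) has a proof of height h in LNGL, then the corresponding premise has a proof of height at most h. -/
section Aux

private lemma split1 {α : Type*} {G H G' : List α} {x c : α}
    (h : G' ++ [c] = G ++ x :: H) :
    (H = [] ∧ G = G' ∧ x = c) ∨ ∃ H', H = H' ++ [c] ∧ G' = G ++ x :: H' := by
  rcases H.eq_nil_or_concat with rfl | ⟨H', c', rfl⟩
  · left
    have hlen : G.length = G'.length := by
      have := congrArg List.length h; simp at this; omega
    obtain ⟨h1, h2⟩ := List.append_inj h.symm hlen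
    simp at h2
    exact ⟨rfl, h1, h2⟩
  · right
    have h' : G' ++ [c] = (G ++ x :: H') ++ [c'] := by simpa using h
    obtain ⟨h1, h2⟩ := List.append_inj' h' (by simp)
    simp at h2
    exact ⟨H', by simp [h2], h1⟩

private theorem weakL (χ : Fml) : ∀ {n : ℕ} {S : LNS}, LNGL n S →
    ∀ G Γ Δ H, S = G ++ (Γ, Δ) :: H → LNGL n (G ++ (χ ::ₘ Γ, Δ) :: H) := by
  intro n S d
  induction d with
  | id1 m G' Γ' Δ' p =>
    intro G Γ Δ H heq
    rcases split1 heq with ⟨rfl, rfl, hc⟩ | ⟨H', rfl, rfl⟩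
    · injection hc with h1 h2; subst h1; subst h2
      rw [Multiset.cons_swap]
      exact LNGL.id1 m G (χ ::ₘ Γ') Δ' p
    · have := LNGL.id1 m (G ++ (χ ::ₘ Γ, Δ) :: H') Γ' Δ' p
      simpa using this
  | id2 m G' Γ' Δ' ψ =>
    intro G Γ Δ H heq
    rcases split1 heq with ⟨rfl, rfl, hc⟩ | ⟨H', rfl, rfl⟩
    · injection hc with h1 h2; subst h1; subst h2
      rw [Multiset.cons_swap]
      exact LNGL.id2 m G (χ ::ₘ Γ') Δ' ψ
    · have := LNGL.id2 m (G ++ (χ ::ₘ Γ, Δ) :: H') Γ' Δ' ψ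
      simpa using this
  | @negL m G' Γ' Δ' ψ prem ih =>
    intro G Γ Δ H heq
    rcases split1 heq with ⟨rfl, rfl, hc⟩ | ⟨H', rfl, rfl⟩
    · injection hc with h1 h2; subst h1; subst h2
      rw [Multiset.cons_swap]
      exact LNGL.negL (ih G Γ' (ψ ::ₘ Δ) [] rfl)
    · have h1 : LNGL m ((G ++ (χ ::ₘ Γ, Δ) :: H') ++ [(Γ', ψ ::ₘ Δ')]) := by
        simpa using ih G Γ Δ (H' ++ [(Γ', ψ ::ₘ Δ')]) (by simp)
      simpa using LNGL.negL h1
  | @negR m G' Γ' Δ' ψ prem ih =>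
    intro G Γ Δ H heq
    rcases split1 heq with ⟨rfl, rfl, hc⟩ | ⟨H', rfl, rfl⟩
    · injection hc with h1 h2; subst h1; subst h2
      have t := ih G (ψ ::ₘ Γ) Δ' [] rfl
      rw [Multiset.cons_swap] at t
      exact LNGL.negR t
    · have h1 : LNGL m ((G ++ (χ ::ₘ Γ, Δ) :: H') ++ [(ψ ::ₘ Γ', Δ')]) := by
        simpa using ih G Γ Δ (H' ++ [(ψ ::ₘ Γ', Δ')]) (by simp)
      simpa using LNGL.negR h1
  | @orL m G' Γ' Δ' ψ₁ ψ₂ prem1 prem2 ih1 ih2 =>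
    intro G Γ Δ H heq
    rcases split1 heq with ⟨rfl, rfl, hc⟩ | ⟨H', rfl, rfl⟩
    · injection hc with h1 h2; subst h1; subst h2
      have t1 := ih1 G (ψ₁ ::ₘ Γ') Δ [] rfl
      have t2 := ih2 G (ψ₂ ::ₘ Γ') Δ [] rfl
      rw [Multiset.cons_swap] at t1 t2
      rw [Multiset.cons_swap]
      exact LNGL.orL t1 t2
    · have t1 : LNGL m ((G ++ (χ ::ₘ Γ, Δ) :: H') ++ [(ψ₁ ::ₘ Γ', Δ')]) := by
        simpa using ih1 G Γ Δ (H' ++ [(ψ₁ ::ₘ Γ', Δ')]) (by simp)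
      have t2 : LNGL m ((G ++ (χ ::ₘ Γ, Δ) :: H') ++ [(ψ₂ ::ₘ Γ', Δ')]) := by
        simpa using ih2 G Γ Δ (H' ++ [(ψ₂ ::ₘ Γ', Δ')]) (by simp)
      simpa using LNGL.orL t1 t2
  | @orR m G' Γ' Δ' ψ₁ ψ₂ prem ih =>
    intro G Γ Δ H heq
    rcases split1 heq with ⟨rfl, rfl, hc⟩ | ⟨H', rfl, rfl⟩
    · injection hc with h1 h2; subst h1; subst h2
      exact LNGL.orR (ih G Γ (ψ₁ ::ₘ ψ₂ ::ₘ Δ') [] rfl)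
    · have h1 : LNGL m ((G ++ (χ ::ₘ Γ, Δ) :: H') ++ [(Γ', ψ₁ ::ₘ ψ₂ ::ₘ Δ')]) := by
        simpa using ih G Γ Δ (H' ++ [(Γ', ψ₁ ::ₘ ψ₂ ::ₘ Δ')]) (by simp)
      simpa using LNGL.orR h1
  | @fourL m G' Γ' Δ' Ξ' Ω' ψ prem ih =>
    intro G Γ Δ H heq
    have heq2 : (G' ++ [(Fml.box ψ ::ₘ Γ', Δ')]) ++ [(Ξ', Ω')] = G ++ (Γ, Δ) :: H := by
      simpa using heq
    rcases split1 heq2 with ⟨rfl, rfl, hc⟩ | ⟨H', rfl, hG⟩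
    · -- weaken in last component
      injection hc with h1 h2; subst h1; subst h2
      have t := ih (G' ++ [(Fml.box ψ ::ₘ Γ', Δ')]) (Fml.box ψ ::ₘ Γ) Δ [] (by simp)
      rw [Multiset.cons_swap] at t
      have t' : LNGL m (G' ++ [(Fml.box ψ ::ₘ Γ', Δ'), (Fml.box ψ ::ₘ χ ::ₘ Γ, Δ)]) := by
        simpa using t
      simpa using LNGL.fourL t'
    · rcases split1 hG with ⟨rfl, rfl, hc⟩ | ⟨H'', rfl, rfl⟩
      · -- weaken in second-to-last component
        injection hc with h1 h2; subst h1; subst h2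
        have t := ih G (Fml.box ψ ::ₘ Γ') Δ [(Fml.box ψ ::ₘ Ξ', Ω')] rfl
        rw [Multiset.cons_swap] at t
        rw [Multiset.cons_swap]
        exact LNGL.fourL t
      · -- weaken inside G
        have t : LNGL m ((G ++ (χ ::ₘ Γ, Δ) :: H'') ++
            [(Fml.box ψ ::ₘ Γ', Δ'), (Fml.box ψ ::ₘ Ξ', Ω')]) := by
          simpa using ih G Γ Δ (H'' ++ [(Fml.box ψ ::ₘ Γ', Δ'), (Fml.box ψ ::ₘ Ξ', Ω')])
            (by simp)
        simpa using LNGL.fourL t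
  | @boxL m G' Γ' Δ' Ξ' Ω' ψ prem ih =>
    intro G Γ Δ H heq
    have heq2 : (G' ++ [(Fml.box ψ ::ₘ Γ', Δ')]) ++ [(Ξ', Ω')] = G ++ (Γ, Δ) :: H := by
      simpa using heq
    rcases split1 heq2 with ⟨rfl, rfl, hc⟩ | ⟨H', rfl, hG⟩
    · injection hc with h1 h2; subst h1; subst h2
      have t := ih (G' ++ [(Fml.box ψ ::ₘ Γ', Δ')]) (ψ ::ₘ Γ) Δ [] (by simp)
      rw [Multiset.cons_swap] at t
      have t' : LNGL m (G' ++ [(Fml.box ψ ::ₘ Γ', Δ'), (ψ ::ₘ χ ::ₘ Γ, Δ)]) := by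
        simpa using t
      simpa using LNGL.boxL t'
    · rcases split1 hG with ⟨rfl, rfl, hc⟩ | ⟨H'', rfl, rfl⟩
      · injection hc with h1 h2; subst h1; subst h2
        have t := ih G (Fml.box ψ ::ₘ Γ') Δ [(ψ ::ₘ Ξ', Ω')] rfl
        rw [Multiset.cons_swap] at t
        rw [Multiset.cons_swap]
        exact LNGL.boxL t
      · have t : LNGL m ((G ++ (χ ::ₘ Γ, Δ) :: H'') ++
            [(Fml.box ψ ::ₘ Γ', Δ'), (ψ ::ₘ Ξ', Ω')]) := by
          simpa using ih G Γ Δ (H'' ++ [(Fml.box ψ ::ₘ Γ', Δ'), (ψ ::ₘ Ξ', Ω')]) (by simp)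
        simpa using LNGL.boxL t
  | @boxR m G' Γ' Δ' ψ prem ih =>
    intro G Γ Δ H heq
    rcases split1 heq with ⟨rfl, rfl, hc⟩ | ⟨H', rfl, rfl⟩
    · injection hc with h1 h2; subst h1; subst h2
      exact LNGL.boxR (ih G Γ Δ' [({Fml.box ψ}, {ψ})] rfl)
    · have h1 : LNGL m ((G ++ (χ ::ₘ Γ, Δ) :: H') ++ [(Γ', Δ'), ({Fml.box ψ}, {ψ})]) := by
        simpa using ih G Γ Δ (H' ++ [(Γ', Δ'), ({Fml.box ψ}, {ψ})]) (by simp)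
      simpa using LNGL.boxR h1

end Aux

/-- The rules 4L and □L are height-preserving invertible in LNGL. -/
theorem lngl_fourL_boxL_hp_invertible (h : ℕ) (G : LNS)
    (Γ Δ Ξ Ω : Multiset Fml) (φ : Fml) :
    (LNGL h (G ++ [(Fml.box φ ::ₘ Γ, Δ), (Ξ, Ω)]) →
      LNGL h (G ++ [(Fml.box φ ::ₘ Γ, Δ), (Fml.box φ ::ₘ Ξ, Ω)])) ∧
    (LNGL h (G ++ [(Fml.box φ ::ₘ Γ, Δ), (Ξ, Ω)]) →
      LNGL h (G ++ [(Fml.box φ ::ₘ Γ, Δ), (φ ::ₘ Ξ, Ω)])) := by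
  constructor
  · intro d
    have := weakL (Fml.box φ) d (G ++ [(Fml.box φ ::ₘ Γ, Δ)]) Ξ Ω [] (by simp)
    simpa using this
  · intro d
    have := weakL φ d (G ++ [(Fml.box φ ::ₘ Γ, Δ)]) Ξ Ω [] (by simp)
    simpa using this
end

section
/- The linear nested sequent calculus LNGL is sound: if a linear nested sequent G is provable in LNGL, then its formula interpretation f(G) is valid on all transitive converse-wellfounded models. -/
/-- Kripke satisfaction for modal formulas. -/
def Sat {W : Type} (R : W → W → Prop) (V : ℕ → W → Prop) : W → Fml → Prop
  | w, .atom n => V n w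
  | w, .neg φ => ¬ Sat R V w φ
  | w, .or φ ψ => Sat R V w φ ∨ Sat R V w ψ
  | w, .box φ => ∀ u, R w u → Sat R V u φ

/-- Validity on all models (W,R,V) with W nonempty, R transitive and
conversely well-founded (no infinite ascending R-chains). -/
def Valid (φ : Fml) : Prop :=
  ∀ (W : Type), Nonempty W → ∀ (R : W → W → Prop) (V : ℕ → W → Prop),
    Transitive R → WellFounded (fun a b => R b a) → ∀ w : W, Sat R V w φ

def verum : Fml := .or (.atom 0) (.neg (.atom 0))

def falsum : Fml := .neg verum

/-- Conjunction of a multiset of formulas. -/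
noncomputable def mconj (Γ : Multiset Fml) : Fml := Γ.toList.foldr Fml.and verum

/-- Disjunction of a multiset of formulas. -/
noncomputable def mdisj (Δ : Multiset Fml) : Fml := Δ.toList.foldr Fml.or falsum

/-- Formula interpretation of a linear nested sequent:
f(Γ ⊢ Δ) = ⋀Γ → ⋁Δ and f(Γ ⊢ Δ // G') = ⋀Γ → (⋁Δ ∨ □ f(G')). -/
noncomputable def interpLNS : LNS → Fml
  | [] => verum
  | [(Γ, Δ)] => Fml.imp (mconj Γ) (mdisj Δ)
  | (Γ, Δ) :: S => Fml.imp (mconj Γ) (Fml.or (mdisj Δ) (Fml.box (interpLNS S)))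

section Soundness

variable {W : Type} (R : W → W → Prop) (V : ℕ → W → Prop)

/-- A world falsifies a component: all of Γ true, all of Δ false. -/
def Falsif (w : W) (c : Multiset Fml × Multiset Fml) : Prop :=
  (∀ φ ∈ c.1, Sat R V w φ) ∧ ∀ φ ∈ c.2, ¬ Sat R V w φ

/-- A falsifying chain through a linear nested sequent from w to u. -/
def Chain : W → LNS → W → Prop
  | _, [], _ => False
  | w, [c], u => u = w ∧ Falsif R V w c
  | w, c :: S, u => Falsif R V w c ∧ ∃ v, R w v ∧ Chain v S u

/-- Context predicate: the possible entry points for the last component. -/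
def Ctx (w : W) (G : LNS) (u : W) : Prop :=
  (G = [] ∧ u = w) ∨ ∃ v, Chain R V w G v ∧ R v u

variable {R V}

lemma chain_nil {w u : W} : Chain R V w [] u ↔ False := Iff.rfl

lemma chain_single {w u : W} {c} : Chain R V w [c] u ↔ u = w ∧ Falsif R V w c := Iff.rfl

lemma chain_cons₂ {w u : W} {c d S} :
    Chain R V w (c :: d :: S) u ↔ Falsif R V w c ∧ ∃ v, R w v ∧ Chain R V v (d :: S) u :=
  Iff.rfl

lemma chain_snoc {w u : W} {G : LNS} {c} :
    Chain R V w (G ++ [c]) u ↔ Ctx R V w G u ∧ Falsif R V u c := by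
  induction G generalizing w with
  | nil =>
    simp only [List.nil_append, chain_single, Ctx, chain_nil]
    constructor
    · rintro ⟨rfl, h⟩; exact ⟨Or.inl ⟨trivial, rfl⟩, h⟩
    · rintro ⟨⟨-, rfl⟩ | ⟨v, hf, -⟩, h⟩
      · exact ⟨rfl, h⟩
      · exact hf.elim
  | cons d G ih =>
    cases G with
    | nil =>
      simp only [List.nil_append, List.cons_append, chain_cons₂, chain_single, Ctx]
      constructor
      · rintro ⟨hd, v, hR, rfl, hf⟩
        exact ⟨Or.inr ⟨w, ⟨rfl, hd⟩, hR⟩, hf⟩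
      · rintro ⟨⟨h, -⟩ | ⟨v, ⟨rfl, hd⟩, hR⟩, hf⟩
        · exact absurd h (by simp)
        · exact ⟨hd, u, hR, rfl, hf⟩
    | cons e G' =>
      simp only [List.cons_append, chain_cons₂] at *
      constructor
      · rintro ⟨hd, v, hR, hc⟩
        rw [ih] at hc
        obtain ⟨hctx, hf⟩ := hc
        refine ⟨?_, hf⟩
        rcases hctx with ⟨h, -⟩ | ⟨t, hct, hRt⟩
        · exact absurd h (by simp)
        · exact Or.inr ⟨t, ⟨hd, v, hR, hct⟩, hRt⟩
      · rintro ⟨⟨h, -⟩ | ⟨t, ⟨hd, v, hR, hct⟩, hRt⟩, hf⟩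
        · exact absurd h (by simp)
        · refine ⟨hd, v, hR, ?_⟩
          rw [ih]
          exact ⟨Or.inr ⟨t, hct, hRt⟩, hf⟩

lemma ctx_ne {w u : W} {G : LNS} (h : G ≠ []) :
    Ctx R V w G u ↔ ∃ v, Chain R V w G v ∧ R v u := by
  unfold Ctx; simp [h]

lemma falsif_cons_left {u : W} {φ : Fml} {Γ Δ : Multiset Fml} :
    Falsif R V u (φ ::ₘ Γ, Δ) ↔ Sat R V u φ ∧ Falsif R V u (Γ, Δ) := by
  simp only [Falsif, Multiset.mem_cons]
  constructor
  · rintro ⟨h1, h2⟩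
    exact ⟨h1 φ (Or.inl rfl), ⟨fun ψ hψ => h1 ψ (Or.inr hψ), h2⟩⟩
  · rintro ⟨hφ, h1, h2⟩
    exact ⟨fun ψ hψ => hψ.elim (fun e => e ▸ hφ) (h1 ψ), h2⟩

lemma falsif_cons_right {u : W} {φ : Fml} {Γ Δ : Multiset Fml} :
    Falsif R V u (Γ, φ ::ₘ Δ) ↔ ¬ Sat R V u φ ∧ Falsif R V u (Γ, Δ) := by
  simp only [Falsif, Multiset.mem_cons]
  constructor
  · rintro ⟨h1, h2⟩
    exact ⟨h2 φ (Or.inl rfl), ⟨h1, fun ψ hψ => h2 ψ (Or.inr hψ)⟩⟩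
  · rintro ⟨hφ, h1, h2⟩
    exact ⟨h1, fun ψ hψ => hψ.elim (fun e => e ▸ hφ) (h2 ψ)⟩

lemma sat_verum {w : W} : Sat R V w verum := by
  simp only [verum, Sat]
  exact Classical.em _ |>.imp id id

lemma sat_and {w : W} {φ ψ : Fml} :
    Sat R V w (Fml.and φ ψ) ↔ Sat R V w φ ∧ Sat R V w ψ := by
  simp only [Fml.and, Sat]; tauto

lemma sat_foldr_and {w : W} {l : List Fml} :
    Sat R V w (l.foldr Fml.and verum) ↔ ∀ φ ∈ l, Sat R V w φ := by
  induction l with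
  | nil => simp [sat_verum]
  | cons a l ih => simp [List.foldr, sat_and, ih]

lemma sat_foldr_or {w : W} {l : List Fml} :
    Sat R V w (l.foldr Fml.or falsum) ↔ ∃ φ ∈ l, Sat R V w φ := by
  induction l with
  | nil => simp [falsum, Sat, sat_verum]
  | cons a l ih =>
    simp only [List.foldr, Sat, ih, List.mem_cons]
    constructor
    · rintro (h | ⟨φ, hφ, h⟩)
      · exact ⟨a, Or.inl rfl, h⟩
      · exact ⟨φ, Or.inr hφ, h⟩
    · rintro ⟨φ, (rfl | hφ), h⟩
      · exact Or.inl h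
      · exact Or.inr ⟨φ, hφ, h⟩

lemma sat_mconj {w : W} {Γ : Multiset Fml} :
    Sat R V w (mconj Γ) ↔ ∀ φ ∈ Γ, Sat R V w φ := by
  unfold mconj
  rw [sat_foldr_and]
  constructor
  · intro h φ hφ; exact h φ (Multiset.mem_toList.mpr hφ)
  · intro h φ hφ; exact h φ (Multiset.mem_toList.mp hφ)

lemma sat_mdisj {w : W} {Δ : Multiset Fml} :
    Sat R V w (mdisj Δ) ↔ ∃ φ ∈ Δ, Sat R V w φ := by
  unfold mdisj
  rw [sat_foldr_or]
  constructor
  · rintro ⟨φ, hφ, h⟩; exact ⟨φ, Multiset.mem_toList.mp hφ, h⟩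
  · rintro ⟨φ, hφ, h⟩; exact ⟨φ, Multiset.mem_toList.mpr hφ, h⟩

lemma not_sat_falsif {w : W} {Γ Δ : Multiset Fml} :
    ¬ Sat R V w (Fml.imp (mconj Γ) (mdisj Δ)) → Falsif R V w (Γ, Δ) := by
  intro h
  simp only [Fml.imp, Sat, not_or, not_not] at h
  obtain ⟨h1, h2⟩ := h
  refine ⟨fun φ hφ => sat_mconj.mp h1 φ hφ, fun φ hφ hs => h2 (sat_mdisj.mpr ⟨φ, hφ, hs⟩)⟩

lemma not_sat_interp {w : W} {S : LNS} (hS : S ≠ []) :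
    ¬ Sat R V w (interpLNS S) → ∃ u, Chain R V w S u := by
  induction S generalizing w with
  | nil => exact absurd rfl hS
  | cons c S ih =>
    obtain ⟨Γ, Δ⟩ := c
    cases S with
    | nil =>
      intro h
      exact ⟨w, rfl, not_sat_falsif h⟩
    | cons d S' =>
      intro h
      simp only [interpLNS, Fml.imp, Sat, not_or, not_not] at h
      obtain ⟨h1, h2, h3⟩ := h
      push_neg at h3
      obtain ⟨v, hRv, hv⟩ := h3
      obtain ⟨u, hu⟩ := ih (by simp) hv
      refine ⟨u, ?_, v, hRv, hu⟩
      exact ⟨fun φ hφ => sat_mconj.mp h1 φ hφ, fun φ hφ hs => h2 (sat_mdisj.mpr ⟨φ, hφ, hs⟩)⟩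

lemma no_chain (hT : Transitive R) (hW : WellFounded (fun a b : W => R b a))
    {n : ℕ} {G : LNS} (hp : LNGL n G) : ∀ w u, ¬ Chain R V w G u := by
  induction hp with
  | id1 n G Γ Δ p =>
    intro w u hc
    rw [chain_snoc] at hc
    obtain ⟨-, h1, h2⟩ := hc
    exact h2 _ (Multiset.mem_cons_self _ _) (h1 _ (Multiset.mem_cons_self _ _))
  | id2 n G Γ Δ φ =>
    intro w u hc
    rw [chain_snoc] at hc
    obtain ⟨-, h1, h2⟩ := hc
    exact h2 _ (Multiset.mem_cons_self _ _) (h1 _ (Multiset.mem_cons_self _ _))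
  | negL hprem ih =>
    intro w u hc
    rw [chain_snoc, falsif_cons_left] at hc
    obtain ⟨hctx, hφ, hf⟩ := hc
    refine ih w u ?_
    rw [chain_snoc, falsif_cons_right]
    exact ⟨hctx, hφ, hf⟩
  | negR hprem ih =>
    intro w u hc
    rw [chain_snoc, falsif_cons_right] at hc
    obtain ⟨hctx, hφ, hf⟩ := hc
    refine ih w u ?_
    rw [chain_snoc, falsif_cons_left]
    exact ⟨hctx, not_not.mp hφ, hf⟩
  | orL hp1 hp2 ih1 ih2 =>
    intro w u hc
    rw [chain_snoc, falsif_cons_left] at hc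
    obtain ⟨hctx, hor, hf⟩ := hc
    rcases hor with h | h
    · exact ih1 w u (by rw [chain_snoc, falsif_cons_left]; exact ⟨hctx, h, hf⟩)
    · exact ih2 w u (by rw [chain_snoc, falsif_cons_left]; exact ⟨hctx, h, hf⟩)
  | orR hprem ih =>
    intro w u hc
    rw [chain_snoc, falsif_cons_right] at hc
    obtain ⟨hctx, hor, hf⟩ := hc
    have : ¬ Sat R V u _ ∧ ¬ Sat R V u _ := not_or.mp hor
    refine ih w u ?_
    rw [chain_snoc, falsif_cons_right, falsif_cons_right]
    exact ⟨hctx, this.1, this.2, hf⟩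
  | fourL hprem ih =>
    intro w u hc
    rw [show ∀ a b : Multiset Fml × Multiset Fml, ∀ G : LNS, G ++ [a, b] = (G ++ [a]) ++ [b]
      from fun a b G => by simp] at hc
    rw [chain_snoc, ctx_ne (by simp)] at hc
    obtain ⟨⟨v, hcv, hRvu⟩, hf2⟩ := hc
    rw [chain_snoc] at hcv
    obtain ⟨hctx, hf1⟩ := hcv
    have hbox : Sat R V v (Fml.box _) := (falsif_cons_left.mp hf1).1
    refine ih w u ?_
    rw [show ∀ a b : Multiset Fml × Multiset Fml, ∀ G : LNS, G ++ [a, b] = (G ++ [a]) ++ [b]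
      from fun a b G => by simp]
    rw [chain_snoc, ctx_ne (by simp)]
    refine ⟨⟨v, chain_snoc.mpr ⟨hctx, hf1⟩, hRvu⟩, ?_⟩
    rw [falsif_cons_left]
    refine ⟨fun t hRut => hbox t (hT hRvu hRut), hf2⟩
  | boxL hprem ih =>
    intro w u hc
    rw [show ∀ a b : Multiset Fml × Multiset Fml, ∀ G : LNS, G ++ [a, b] = (G ++ [a]) ++ [b]
      from fun a b G => by simp] at hc
    rw [chain_snoc, ctx_ne (by simp)] at hc
    obtain ⟨⟨v, hcv, hRvu⟩, hf2⟩ := hc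
    rw [chain_snoc] at hcv
    obtain ⟨hctx, hf1⟩ := hcv
    have hbox : Sat R V v (Fml.box _) := (falsif_cons_left.mp hf1).1
    refine ih w u ?_
    rw [show ∀ a b : Multiset Fml × Multiset Fml, ∀ G : LNS, G ++ [a, b] = (G ++ [a]) ++ [b]
      from fun a b G => by simp]
    rw [chain_snoc, ctx_ne (by simp)]
    refine ⟨⟨v, chain_snoc.mpr ⟨hctx, hf1⟩, hRvu⟩, ?_⟩
    rw [falsif_cons_left]
    exact ⟨hbox u hRvu, hf2⟩
  | @boxR m G' Γ Δ φ hprem ih =>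
    intro w u hc
    rw [chain_snoc, falsif_cons_right] at hc
    obtain ⟨hctx, hnbox, hf⟩ := hc
    simp only [Sat] at hnbox
    push_neg at hnbox
    obtain ⟨t₀, hRt₀, hnφ₀⟩ := hnbox
    obtain ⟨t, ⟨hRut, hnφ⟩, hmin⟩ :=
      hW.has_min {t | R u t ∧ ¬ Sat R V t φ} ⟨t₀, hRt₀, hnφ₀⟩
    refine ih w t ?_
    rw [show ∀ a b : Multiset Fml × Multiset Fml, ∀ G : LNS, G ++ [a, b] = (G ++ [a]) ++ [b]
      from fun a b G => by simp]
    rw [chain_snoc, ctx_ne (by simp)]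
    refine ⟨⟨u, chain_snoc.mpr ⟨hctx, hf⟩, hRut⟩, ?_, ?_⟩
    · intro ψ hψ
      rw [Multiset.mem_singleton] at hψ
      subst hψ
      intro s hRts
      by_contra hn
      exact hmin s ⟨hT hRut hRts, hn⟩ hRts
    · intro ψ hψ
      rw [Multiset.mem_singleton] at hψ
      subst hψ
      exact hnφ

/-- Soundness of LNGL: if a linear nested sequent is provable in LNGL, then
its formula interpretation is valid on all transitive converse-wellfounded
models. -/
theorem lngl_sound (n : ℕ) (G : LNS) (hp : LNGL n G) : Valid (interpLNS G) := by
  intro W _ R V hT hW w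
  by_contra h
  have hne : G ≠ [] := by
    rintro rfl
    exact h (by simpa only [interpLNS] using (sat_verum : Sat R V w verum))
  obtain ⟨u, hc⟩ := not_sat_interp hne h
  exact no_chain hT hW hp w u hc

end Soundness
end

section
/- The irreflexivity rule ir does not occur in any G3GL proof whose end sequent is a tree sequent: if R, Γ ⊢ Δ is a tree sequent, then no sequent occurring in a G3GL proof of it contains a relational atom of the form xRx, and more generally no sequent in the proof contains a directed cycle of relational atoms. -/
/-- A label y is fresh for the data R, Γ, Δ. -/
def FreshFor (y : ℕ) (R : Set (ℕ × ℕ)) (Γ Δ : Multiset (ℕ × Fml)) : Prop :=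
  (∀ a b, (a, b) ∈ R → y ≠ a ∧ y ≠ b) ∧ (∀ ψ, (y, ψ) ∉ Γ) ∧ (∀ ψ, (y, ψ) ∉ Δ)

/-- Edge relation of a set of relational atoms. -/
def Edge (R : Set (ℕ × ℕ)) (a b : ℕ) : Prop := (a, b) ∈ R

/-- Labels occurring in a set of relational atoms. -/
def nodes (R : Set (ℕ × ℕ)) : Set ℕ := {x | ∃ y, (x, y) ∈ R ∨ (y, x) ∈ R}

/-- The relational atoms R form a (rooted) tree. -/
def IsTree (R : Set (ℕ × ℕ)) : Prop :=
  ∃ r ∈ nodes R,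
    (∀ x ∈ nodes R, Relation.ReflTransGen (Edge R) r x) ∧
    (∀ x, ¬ Relation.TransGen (Edge R) x x) ∧
    (∀ x y y', Edge R y x → Edge R y' x → y = y') ∧
    (∀ y, ¬ Edge R y r)

/-- `TreeSeq R Γ Δ` : the labeled sequent R, Γ ⊢ Δ is a tree sequent. -/
def TreeSeq (R : Set (ℕ × ℕ)) (Γ Δ : Multiset (ℕ × Fml)) : Prop :=
  (R = ∅ → ∃ x, ∀ p ∈ Γ + Δ, Prod.fst p = x) ∧
  (R ≠ ∅ → IsTree R ∧ ∀ p ∈ Γ + Δ, Prod.fst p ∈ nodes R)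

/-- `r` is the root of the tree sequent R, Γ ⊢ Δ. -/
def IsRootOf (R : Set (ℕ × ℕ)) (Γ Δ : Multiset (ℕ × Fml)) (r : ℕ) : Prop :=
  (R = ∅ ∧ ∀ p ∈ Γ + Δ, Prod.fst p = r) ∨
  (r ∈ nodes R ∧ ∀ x ∈ nodes R, Relation.ReflTransGen (Edge R) r x)

/-- x is a leaf of the tree of relational atoms R. -/
def Leaf (R : Set (ℕ × ℕ)) (x : ℕ) : Prop := ∀ y, (x, y) ∉ R

/-- x is a pre-leaf: all of its children are leaves. -/
def PreLeaf (R : Set (ℕ × ℕ)) (x : ℕ) : Prop := ∀ y, (x, y) ∈ R → Leaf R y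

/-- Proof trees of the labeled sequent calculus G3GL: `G3D R Γ Δ` is the type
of G3GL proofs of the labeled sequent R, Γ ⊢ Δ. -/
inductive G3D : Set (ℕ × ℕ) → Multiset (ℕ × Fml) → Multiset (ℕ × Fml) → Type
  | id1 (R : Set (ℕ × ℕ)) (Γ Δ : Multiset (ℕ × Fml)) (x p : ℕ) :
      G3D R ((x, Fml.atom p) ::ₘ Γ) ((x, Fml.atom p) ::ₘ Δ)
  | id2 (R : Set (ℕ × ℕ)) (Γ Δ : Multiset (ℕ × Fml)) (x : ℕ) (φ : Fml) :
      G3D R ((x, Fml.box φ) ::ₘ Γ) ((x, Fml.box φ) ::ₘ Δ)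
  | ir (R : Set (ℕ × ℕ)) (Γ Δ : Multiset (ℕ × Fml)) (x : ℕ) (h : (x, x) ∈ R) :
      G3D R Γ Δ
  | tr (R : Set (ℕ × ℕ)) (Γ Δ : Multiset (ℕ × Fml)) (x y z : ℕ)
      (hxy : (x, y) ∈ R) (hyz : (y, z) ∈ R) :
      G3D (insert (x, z) R) Γ Δ → G3D R Γ Δ
  | negL (R : Set (ℕ × ℕ)) (Γ Δ : Multiset (ℕ × Fml)) (x : ℕ) (φ : Fml) :
      G3D R Γ ((x, φ) ::ₘ Δ) → G3D R ((x, Fml.neg φ) ::ₘ Γ) Δ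
  | negR (R : Set (ℕ × ℕ)) (Γ Δ : Multiset (ℕ × Fml)) (x : ℕ) (φ : Fml) :
      G3D R ((x, φ) ::ₘ Γ) Δ → G3D R Γ ((x, Fml.neg φ) ::ₘ Δ)
  | orL (R : Set (ℕ × ℕ)) (Γ Δ : Multiset (ℕ × Fml)) (x : ℕ) (φ ψ : Fml) :
      G3D R ((x, φ) ::ₘ Γ) Δ → G3D R ((x, ψ) ::ₘ Γ) Δ →
      G3D R ((x, Fml.or φ ψ) ::ₘ Γ) Δ
  | orR (R : Set (ℕ × ℕ)) (Γ Δ : Multiset (ℕ × Fml)) (x : ℕ) (φ ψ : Fml) :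
      G3D R Γ ((x, φ) ::ₘ (x, ψ) ::ₘ Δ) → G3D R Γ ((x, Fml.or φ ψ) ::ₘ Δ)
  | boxL (R : Set (ℕ × ℕ)) (Γ Δ : Multiset (ℕ × Fml)) (x y : ℕ) (φ : Fml)
      (h : (x, y) ∈ R) :
      G3D R ((x, Fml.box φ) ::ₘ (y, φ) ::ₘ Γ) Δ → G3D R ((x, Fml.box φ) ::ₘ Γ) Δ
  | boxR (R : Set (ℕ × ℕ)) (Γ Δ : Multiset (ℕ × Fml)) (x y : ℕ) (φ : Fml)
      (hxy : y ≠ x) (hfresh : FreshFor y R Γ ((x, Fml.box φ) ::ₘ Δ)) :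
      G3D (insert (x, y) R) ((y, Fml.box φ) ::ₘ Γ) ((y, φ) ::ₘ Δ) →
      G3D R Γ ((x, Fml.box φ) ::ₘ Δ)

/-- The rule ir does not occur anywhere in the proof tree. -/
def IrFree : ∀ {R : Set (ℕ × ℕ)} {Γ Δ : Multiset (ℕ × Fml)}, G3D R Γ Δ → Prop
  | _, _, _, .id1 _ _ _ _ _ => True
  | _, _, _, .id2 _ _ _ _ _ => True
  | _, _, _, .ir _ _ _ _ _ => False
  | _, _, _, .tr _ _ _ _ _ _ _ _ d => IrFree d
  | _, _, _, .negL _ _ _ _ _ d => IrFree d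
  | _, _, _, .negR _ _ _ _ _ d => IrFree d
  | _, _, _, .orL _ _ _ _ _ _ d e => IrFree d ∧ IrFree e
  | _, _, _, .orR _ _ _ _ _ _ d => IrFree d
  | _, _, _, .boxL _ _ _ _ _ _ _ d => IrFree d
  | _, _, _, .boxR _ _ _ _ _ _ _ _ d => IrFree d

/-- `AllRel P d` : the property P holds of the set of relational atoms of
every sequent occurring in the proof tree d. -/
def AllRel (P : Set (ℕ × ℕ) → Prop) :
    ∀ {R : Set (ℕ × ℕ)} {Γ Δ : Multiset (ℕ × Fml)}, G3D R Γ Δ → Prop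
  | R, _, _, .id1 _ _ _ _ _ => P R
  | R, _, _, .id2 _ _ _ _ _ => P R
  | R, _, _, .ir _ _ _ _ _ => P R
  | R, _, _, .tr _ _ _ _ _ _ _ _ d => P R ∧ AllRel P d
  | R, _, _, .negL _ _ _ _ _ d => P R ∧ AllRel P d
  | R, _, _, .negR _ _ _ _ _ d => P R ∧ AllRel P d
  | R, _, _, .orL _ _ _ _ _ _ d e => P R ∧ AllRel P d ∧ AllRel P e
  | R, _, _, .orR _ _ _ _ _ _ d => P R ∧ AllRel P d
  | R, _, _, .boxL _ _ _ _ _ _ _ d => P R ∧ AllRel P d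
  | R, _, _, .boxR _ _ _ _ _ _ _ _ d => P R ∧ AllRel P d


/-! Reading a G3GL proof bottom-up, each rule keeps the relational atoms of its conclusion, adds a
transitive edge `xRz` along an existing path `xRy, yRz`, or (rule □R) adds an edge `xRy` to a
label `y` that has no outgoing edges. None of these can close a directed cycle, so acyclicity of the
relational atoms propagates from the end sequent to every sequent of the proof. A tree sequent is
acyclic, and the premise `xRx` of ir can then never be met. -/

open Relation

section Acyclic

variable {α : Type*}

def Acyclic (R : Set (α × α)) : Prop :=
  ∀ x, ¬ TransGen (fun a b => (a, b) ∈ R) x x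

theorem acyclic_empty : Acyclic (∅ : Set (α × α)) := by
  intro x hx
  obtain ⟨_, hx, _⟩ := TransGen.head'_iff.mp hx
  exact hx

variable {R : Set (α × α)}

theorem Acyclic.irrefl (h : Acyclic R) (x : α) : (x, x) ∉ R :=
  fun hx => h x (.single hx)

theorem Acyclic.insert_of_transGen {x z : α} (h : Acyclic R)
    (hxz : TransGen (fun a b => (a, b) ∈ R) x z) : Acyclic (insert (x, z) R) := by
  have hsub : (fun a b => (a, b) ∈ insert (x, z) R) ≤ TransGen (fun a b => (a, b) ∈ R) := by
    rintro a b (hab | hab)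
    · obtain ⟨rfl, rfl⟩ := Prod.mk.inj hab
      exact hxz
    · exact .single hab
  exact fun u hu => h u (TransGen.closed hsub u u hu)

theorem Acyclic.insert_of_forall_notMem {x y : α} (h : Acyclic R) (hyx : y ≠ x)
    (hy : ∀ b, (y, b) ∉ R) : Acyclic (insert (x, y) R) := by
  -- A path that does not end at `y` cannot use the new edge, since nothing leaves `y`.
  have hpath : ∀ u v, TransGen (fun a b => (a, b) ∈ insert (x, y) R) u v → v ≠ y →
      TransGen (fun a b => (a, b) ∈ R) u v := by
    intro u v huv hvy
    induction huv with
    | single hs =>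
      rcases hs with hs | hs
      · exact absurd (Prod.mk.inj hs).2 hvy
      · exact .single hs
    | @tail b c _ hbc ih =>
      rcases hbc with hbc | hbc
      · exact absurd (Prod.mk.inj hbc).2 hvy
      · exact (ih fun hb => hy c (hb ▸ hbc)).tail hbc
  intro u hu
  by_cases huy : u = y
  · subst huy
    obtain ⟨c, hc | hc, _⟩ := TransGen.head'_iff.mp hu
    · exact hyx (Prod.mk.inj hc).1
    · exact hy c hc
  · exact h u (hpath u u hu huy)

end Acyclic

theorem TreeSeq.acyclic {R : Set (ℕ × ℕ)} {Γ Δ : Multiset (ℕ × Fml)}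
    (hT : TreeSeq R Γ Δ) : Acyclic R := by
  by_cases hR : R = ∅
  · exact hR ▸ acyclic_empty
  · obtain ⟨_, _, _, hacyc, _⟩ := (hT.2 hR).1
    exact hacyc

namespace G3D

variable {R : Set (ℕ × ℕ)} {Γ Δ : Multiset (ℕ × Fml)}

theorem allRel_mono {P Q : Set (ℕ × ℕ) → Prop} (hPQ : ∀ R, P R → Q R) (d : G3D R Γ Δ)
    (hd : AllRel P d) : AllRel Q d := by
  induction d with
  | id1 | id2 | ir => exact hPQ _ hd
  | orL _ _ _ _ _ _ _ _ ihd ihe => exact ⟨hPQ _ hd.1, ihd hd.2.1, ihe hd.2.2⟩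
  | tr _ _ _ _ _ _ _ _ _ ih | negL _ _ _ _ _ _ ih | negR _ _ _ _ _ _ ih
  | orR _ _ _ _ _ _ _ ih | boxL _ _ _ _ _ _ _ _ ih | boxR _ _ _ _ _ _ _ _ _ ih =>
    exact ⟨hPQ _ hd.1, ih hd.2⟩

theorem allRel_acyclic (d : G3D R Γ Δ) (h : Acyclic R) : AllRel Acyclic d := by
  induction d with
  | id1 | id2 | ir => exact h
  | tr _ _ _ _ _ _ hxy hyz _ ih =>
    exact ⟨h, ih (h.insert_of_transGen (.tail (.single hxy) hyz))⟩
  | boxR _ _ _ _ _ _ hyx hfresh _ ih =>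
    exact ⟨h, ih (h.insert_of_forall_notMem hyx fun b hb => (hfresh.1 _ b hb).1 rfl)⟩
  | orL _ _ _ _ _ _ _ _ ihd ihe => exact ⟨h, ihd h, ihe h⟩
  | negL _ _ _ _ _ _ ih | negR _ _ _ _ _ _ ih | orR _ _ _ _ _ _ _ ih
  | boxL _ _ _ _ _ _ _ _ ih => exact ⟨h, ih h⟩

theorem irFree_of_allRel_acyclic (d : G3D R Γ Δ) (hd : AllRel Acyclic d) : IrFree d := by
  induction d with
  | id1 | id2 => trivial
  | ir _ _ _ x hx => exact hd.irrefl x hx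
  | orL _ _ _ _ _ _ _ _ ihd ihe => exact ⟨ihd hd.2.1, ihe hd.2.2⟩
  | tr _ _ _ _ _ _ _ _ _ ih | negL _ _ _ _ _ _ ih | negR _ _ _ _ _ _ ih
  | orR _ _ _ _ _ _ _ ih | boxL _ _ _ _ _ _ _ _ ih | boxR _ _ _ _ _ _ _ _ _ ih =>
    exact ih hd.2

end G3D

/-- In any G3GL proof of a tree sequent, the rule ir does not occur; moreover
no sequent occurring in the proof contains a relational atom xRx, and more
generally no sequent in the proof contains a directed cycle of relational
atoms. -/
theorem g3gl_tree_sequent_proofs_ir_free_and_acyclic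
    (R : Set (ℕ × ℕ)) (Γ Δ : Multiset (ℕ × Fml)) (hT : TreeSeq R Γ Δ)
    (d : G3D R Γ Δ) :
    IrFree d ∧
    AllRel (fun R' => (∀ x, (x, x) ∉ R') ∧
      ∀ x, ¬ Relation.TransGen (fun a b => (a, b) ∈ R') x x) d := by
  have hacyc : AllRel Acyclic d := d.allRel_acyclic hT.acyclic
  exact ⟨d.irFree_of_allRel_acyclic hacyc,
    d.allRel_mono (fun _ h => ⟨h.irrefl, h⟩) hacyc⟩
end
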